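/- Assume n > 3f, T ≥ 1, Ψ ≥ T, and pulse sparsity, suppose a correct node v satisfies r(v,t) = 1 in a round t > T + 2, and let U = {u ∈ V∖F : trig(u,t) = 1}. For u ∈ U define the consensus input in(u) = 1 iff u received b(u,w,t−1) = 1 from at least n − f nodes w ∈ V, and in(u) = 0 otherwise. Then either U = V∖F (all correct nodes participate in the instance started in round t) or in(u) = 0 for every u ∈ U. -/
import Mathlib


/-- Lemma: full participation or all-zero inputs.
Same pruning setting as before: a network on `V` with `n = |V| > 3f` nodes and
faulty set `F`, `|F| ≤ f`; correct nodes broadcast accepted-pulse bits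
`b(u,t)` with received values `brec`; pulse sparsity holds; and the counters
`r(v,t) ∈ {1,…,T} ∪ {⊥}` follow the pruning recursion with trigger
`trig(v,t) = 1` iff `v` received `b = 1` from at least `n − 2f` nodes in round
`t−1`.  Suppose a correct node `v` has `r(v,t) = 1` in a round `t > T + 2`,
let `U = {u ∈ V∖F : trig(u,t) = 1}`, and for `u ∈ U` let the consensus input
be `in(u) = 1` iff `u` received `b = 1` from at least `n − f` nodes in round
`t−1`.  Then either `U = V∖F` or every `u ∈ U` has `in(u) = 0`. -/
theorem pruning_full_participation {V : Type*} [Fintype V] [DecidableEq V]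
    (F : Finset V) (f T Ψ : ℕ)
    (hn : Fintype.card V > 3 * f) (hF : F.card ≤ f)
    (hT : 1 ≤ T) (hΨ : T ≤ Ψ)
    (b : V → ℕ → ℕ) (brec : V → V → ℕ → ℕ) (r : V → ℕ → Option ℕ)
    (hbbits : ∀ u, u ∉ F → ∀ t, b u t = 0 ∨ b u t = 1)
    (hbrec : ∀ v u, u ∉ F → ∀ t, brec v u t = b u t)
    (hsparse : ∀ v w, v ∉ F → w ∉ F → ∀ s s', 2 < s → s < s' → s' < s + Ψ →
      ¬(b v s = 1 ∧ b w s' = 1))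
    (hrrange : ∀ v, v ∉ F → ∀ t,
      r v t = none ∨ ∃ ρ, r v t = some ρ ∧ 1 ≤ ρ ∧ ρ ≤ T)
    (hr : ∀ v, v ∉ F → ∀ t, 2 ≤ t →
      r v t =
        if Fintype.card V - 2 * f ≤
            (Finset.univ.filter fun u => brec v u (t - 1) = 1).card
        then some 1
        else match r v (t - 1) with
          | some ρ => if ρ < T then some (ρ + 1) else none
          | none => none) :
    ∀ v, v ∉ F → ∀ t, T + 2 < t → r v t = some 1 →
      ({u : V | u ∉ F ∧ Fintype.card V - 2 * f ≤
          (Finset.univ.filter fun z => brec u z (t - 1) = 1).card}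
        = {u : V | u ∉ F}) ∨
      (∀ u ∈ {u : V | u ∉ F ∧ Fintype.card V - 2 * f ≤
          (Finset.univ.filter fun z => brec u z (t - 1) = 1).card},
        ¬(Fintype.card V - f ≤
          (Finset.univ.filter fun z => brec u z (t - 1) = 1).card)) := by
  intro v hv t ht hrv
  by_cases H : ∀ u ∈ {u : V | u ∉ F ∧ Fintype.card V - 2 * f ≤
      (Finset.univ.filter fun z => brec u z (t - 1) = 1).card},
      ¬(Fintype.card V - f ≤
        (Finset.univ.filter fun z => brec u z (t - 1) = 1).card)
  · exact Or.inr H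
  · left
    push_neg at H
    obtain ⟨u, hu, hcount⟩ := H
    obtain ⟨huF, -⟩ := hu
    ext u'
    simp only [Set.mem_setOf_eq]
    refine ⟨fun h => h.1, fun hu' => ⟨hu', ?_⟩⟩
    set A := Finset.univ.filter fun z => brec u z (t - 1) = 1 with hA
    have hsub : A \ F ⊆ Finset.univ.filter fun z => brec u' z (t - 1) = 1 := by
      intro z hz
      rw [Finset.mem_sdiff] at hz
      obtain ⟨hzA, hzF⟩ := hz
      rw [hA, Finset.mem_filter] at hzA
      rw [Finset.mem_filter]
      refine ⟨Finset.mem_univ _, ?_⟩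
      rw [hbrec u' z hzF]
      rw [hbrec u z hzF] at hzA
      exact hzA.2
    have h1 : A.card ≤ (A \ F).card + F.card := Finset.card_le_card_sdiff_add_card
    have h2 : (A \ F).card ≤ (Finset.univ.filter fun z => brec u' z (t - 1) = 1).card :=
      Finset.card_le_card hsub
    omega
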